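/- For integers n ≥ 1 and a sequence (a_j) of complex numbers, if f(z) = −Σ_{j=1}^∞ ((−1)^j/j) a_j (z/(1−z)^2)^j converges on a neighborhood of 0, then the n-th Taylor coefficient of z f'(z) (equivalently, n times the n-th Taylor coefficient of f) equals −n Σ_{j=1}^n ((−1)^j/j) C(n+j−1, 2j−1) a_j. -/

import Mathlib

open Finset

/-!
Since `z / (1 - z) ^ 2 = z (1 - z)⁻²`, the binomial series gives
`(z / (1 - z) ^ 2) ^ (j + 1) = ∑ₘ C(m + j, 2j + 1) zᵐ`, a series starting at `z ^ (j + 1)`.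
Convergence of the defining series of `f` at the real point `|z|` makes the resulting double
series absolutely convergent, so it may be summed along powers of `z`; the coefficient of `zᵐ`
is then the finite sum over `j < m`, and uniqueness of power series coefficients identifies it
with `c m`.
-/

theorem hasSum_choose_mul_pow_eq_pow_succ {𝕜 : Type*} [NormedField 𝕜] (j : ℕ) {z : 𝕜}
    (hz : ‖z‖ < 1) :
    HasSum (fun m : ℕ => ((m + j).choose (2 * j + 1) : 𝕜) * z ^ m)
      ((z / (1 - z) ^ 2) ^ (j + 1)) := by
  refine (hasSum_nat_add_iff' (j + 1)).1 ?_
  have hhead : ∑ m ∈ range (j + 1), ((m + j).choose (2 * j + 1) : 𝕜) * z ^ m = 0 :=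
    sum_eq_zero fun m hm => by
      rw [Nat.choose_eq_zero_of_lt (by rw [mem_range] at hm; omega), Nat.cast_zero, zero_mul]
  rw [hhead, sub_zero, div_pow, ← pow_mul, div_eq_mul_one_div (z ^ (j + 1)),
    show 2 * (j + 1) = 2 * j + 1 + 1 by ring]
  refine ((hasSum_choose_mul_geometric_of_norm_lt_one (2 * j + 1) hz).mul_left
    (z ^ (j + 1))).congr_fun fun n => ?_
  rw [show n + (j + 1) + j = n + (2 * j + 1) by omega, pow_add]
  ring

theorem hasSum_tsum_comm_of_hasSum_norm {E β γ : Type*} [NormedAddCommGroup E] [CompleteSpace E]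
    {F : β → γ → E} {g : β → E} {G : β → ℝ} {S : E}
    (hg : HasSum g S) (hF : ∀ b, HasSum (F b) (g b))
    (hG : Summable G) (hFG : ∀ b, HasSum (fun c => ‖F b c‖) (G b)) :
    HasSum (fun c => ∑' b, F b c) S := by
  have hsum : Summable (Function.uncurry F) := by
    refine Summable.of_norm <| (summable_prod_of_nonneg fun _ => norm_nonneg _).2
      ⟨fun b => (hFG b).summable, ?_⟩
    simpa only [Function.uncurry_apply_pair, fun b => (hFG b).tsum_eq] using hG
  have hprod : HasSum (Function.uncurry F) S := by
    convert hsum.hasSum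
    rw [hsum.tsum_prod' fun b => (hF b).summable, ← hg.tsum_eq]
    exact tsum_congr fun b => (hF b).tsum_eq.symm
  exact ((Equiv.prodComm γ β).hasSum_iff.2 hprod).prod_fiberwise
    fun c => (hsum.prod_symm.prod_factor c).hasSum

theorem hasSum_sum_range_choose_mul_pow {𝕜 : Type*} [RCLike 𝕜]
    {b : ℕ → 𝕜} {S z : 𝕜} (hz : ‖z‖ < 1)
    (hb : Summable fun j => ‖b j‖ * (‖z‖ / (1 - ‖z‖) ^ 2) ^ (j + 1))
    (hS : HasSum (fun j => b j * (z / (1 - z) ^ 2) ^ (j + 1)) S) :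
    HasSum (fun m => (∑ j ∈ range m, b j * (m + j).choose (2 * j + 1)) * z ^ m) S := by
  have hz' : ‖‖z‖‖ < 1 := by rwa [norm_norm]
  have hcomm := hasSum_tsum_comm_of_hasSum_norm hS
    (fun j => (hasSum_choose_mul_pow_eq_pow_succ j hz).mul_left (b j)) hb
    (fun j => ((hasSum_choose_mul_pow_eq_pow_succ j hz').mul_left ‖b j‖).congr_fun fun m => by
      simp only [norm_mul, norm_pow, RCLike.norm_natCast])
  refine hcomm.congr_fun fun m => ?_
  rw [sum_mul, tsum_eq_sum (s := range m) fun j hj => ?_]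
  · exact sum_congr rfl fun j _ => by ring
  · rw [Nat.choose_eq_zero_of_lt (by rw [mem_range] at hj; omega), Nat.cast_zero, zero_mul,
      mul_zero]

theorem hasFPowerSeriesOnBall_ofScalars_of_hasSum {𝕜 : Type*} [RCLike 𝕜]
    {c : ℕ → 𝕜} {f : 𝕜 → 𝕜} {ρ : NNReal} (hρ : 0 < ρ)
    (hc : ∀ z : 𝕜, ‖z‖ < ρ → HasSum (fun m => c m * z ^ m) (f z)) :
    HasFPowerSeriesOnBall f (FormalMultilinearSeries.ofScalars 𝕜 c) 0 ρ where
  r_le := by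
    refine ENNReal.le_of_forall_nnreal_lt fun t ht => ?_
    have hct := (hc ((t : ℝ) : 𝕜) (by simpa using ht)).summable.tendsto_atTop_zero.norm
    refine FormalMultilinearSeries.le_radius_of_tendsto _ (l := 0) ?_
    simpa [FormalMultilinearSeries.ofScalars_norm] using hct
  r_pos := by exact_mod_cast hρ
  hasSum {y} hy := by
    rw [Metric.eball_coe, Metric.mem_ball, dist_zero_right] at hy
    simpa [FormalMultilinearSeries.ofScalars_apply_eq, mul_comm] using hc y hy

theorem coeff_eq_of_hasSum_pow {𝕜 : Type*} [RCLike 𝕜]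
    {c e : ℕ → 𝕜} {f : 𝕜 → 𝕜} {ρ : ℝ} (hρ : 0 < ρ)
    (hc : ∀ z : 𝕜, ‖z‖ < ρ → HasSum (fun m => c m * z ^ m) (f z))
    (he : ∀ z : 𝕜, ‖z‖ < ρ → HasSum (fun m => e m * z ^ m) (f z)) : c = e := by
  lift ρ to NNReal using hρ.le
  exact FormalMultilinearSeries.ofScalars_series_injective 𝕜 𝕜
    ((hasFPowerSeriesOnBall_ofScalars_of_hasSum hρ hc).hasFPowerSeriesAt.eq_formalMultilinearSeries
      (hasFPowerSeriesOnBall_ofScalars_of_hasSum hρ he).hasFPowerSeriesAt)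

theorem sum_range_choose_eq_neg_sum_Icc {K : Type*} [Field K] (a : ℕ → K) (n : ℕ) :
    ∑ j ∈ range n, -((-1 : K) ^ (j + 1) / (j + 1)) * a (j + 1) * (n + j).choose (2 * j + 1) =
      -∑ j ∈ Icc 1 n, ((-1 : K) ^ j / j) * ((n + j - 1).choose (2 * j - 1) : K) * a j := by
  rw [← Ico_add_one_right_eq_Icc, sum_Ico_eq_sum_range, Nat.add_sub_cancel, ← sum_neg_distrib]
  refine sum_congr rfl fun j _ => ?_
  rw [show n + (1 + j) - 1 = n + j by omega, show 2 * (1 + j) - 1 = 2 * j + 1 by omega,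
    add_comm 1 j]
  push_cast
  ring

theorem summable_norm_mul_pow_of_hasSum_ofReal {b : ℕ → ℂ} {t : ℝ} {S : ℂ} (ht : 0 ≤ t)
    (hS : HasSum (fun j => b j * ((t : ℂ) / (1 - (t : ℂ)) ^ 2) ^ (j + 1)) S) :
    Summable fun j => ‖b j‖ * (t / (1 - t) ^ 2) ^ (j + 1) := by
  have hw : (t : ℂ) / (1 - (t : ℂ)) ^ 2 = ((t / (1 - t) ^ 2 : ℝ) : ℂ) := by push_cast; rfl
  refine (summable_norm_iff.2 hS.summable).congr fun j => ?_
  rw [norm_mul, norm_pow, hw, Complex.norm_real, Real.norm_of_nonneg (by positivity)]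

theorem taylor_coefficient_formula_general (n : ℕ) (a : ℕ → ℂ)
    (f : ℂ → ℂ) (r : ℝ) (hr : 0 < r)
    (hf : ∀ z : ℂ, ‖z‖ < r →
      HasSum (fun j : ℕ =>
          -((-1 : ℂ) ^ (j + 1) / (j + 1)) * a (j + 1) * (z / (1 - z) ^ 2) ^ (j + 1)) (f z))
    (c : ℕ → ℂ)
    (hc : ∀ z : ℂ, ‖z‖ < r → HasSum (fun m : ℕ => c m * z ^ m) (f z)) :
    (n : ℂ) * c n =
      -(n : ℂ) * ∑ j ∈ Finset.Icc 1 n,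
        ((-1 : ℂ) ^ j / j) * (Nat.choose (n + j - 1) (2 * j - 1) : ℂ) * a j := by
  have hexpansion : ∀ z : ℂ, ‖z‖ < min r 1 → HasSum (fun m => (∑ j ∈ range m,
      -((-1 : ℂ) ^ (j + 1) / (j + 1)) * a (j + 1) * (m + j).choose (2 * j + 1)) * z ^ m)
      (f z) := by
    intro z hz
    have hzr : ‖z‖ < r := hz.trans_le (min_le_left _ _)
    refine hasSum_sum_range_choose_mul_pow (hz.trans_le (min_le_right _ _)) ?_ (hf z hzr)
    exact summable_norm_mul_pow_of_hasSum_ofReal (norm_nonneg z) (hf _ (by simpa using hzr))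
  have hcoeff := congrFun (coeff_eq_of_hasSum_pow (lt_min hr one_pos)
    (fun z hz => hc z (hz.trans_le (min_le_left _ _))) hexpansion) n
  rw [hcoeff, sum_range_choose_eq_neg_sum_Icc]
  ring

theorem taylor_coefficient_formula (n : ℕ) (hn : 1 ≤ n) (a : ℕ → ℂ)
    (f : ℂ → ℂ) (r : ℝ) (hr : 0 < r)
    (hf : ∀ z : ℂ, ‖z‖ < r →
      HasSum (fun j : ℕ =>
          -((-1 : ℂ) ^ (j + 1) / (j + 1)) * a (j + 1) * (z / (1 - z) ^ 2) ^ (j + 1)) (f z))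
    (c : ℕ → ℂ)
    (hc : ∀ z : ℂ, ‖z‖ < r → HasSum (fun m : ℕ => c m * z ^ m) (f z)) :
    (n : ℂ) * c n =
      -(n : ℂ) * ∑ j ∈ Finset.Icc 1 n,
        ((-1 : ℂ) ^ j / j) * (Nat.choose (n + j - 1) (2 * j - 1) : ℂ) * a j :=
  taylor_coefficient_formula_general n a f r hr hf c hc
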